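/- C validates the connexive theses: for all formulas A and B, the sequents ⇒ ∼(∼A → A) (Aristotle's thesis AT), ⇒ ∼(A → ∼A) (AT'), ⇒ (A → B) → ∼(A → ∼B) (Boethius' thesis BT), and ⇒ (A → ∼B) → ∼(A → B) (BT') are all derivable in G3C. -/

import Mathlib

/-- Formulas of the connexive logic C: propositional variables, strong
negation `∼`, conjunction, disjunction and implication. -/
inductive Formula : Type
  | var : Nat → Formula
  | snot : Formula → Formula
  | and : Formula → Formula → Formula
  | or : Formula → Formula → Formula
  | imp : Formula → Formula → Formula
deriving DecidableEq
/-- Derivability of sequents `Γ ⇒ A` (with `Γ` a finite multiset of formulas)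
in the sequent calculus `G3C` for the connexive logic `C`. -/
inductive Gder : Multiset Formula → Formula → Prop
  | ax {Γ n} : Gder (.var n ::ₘ Γ) (.var n)
  | axSnot {Γ n} : Gder (.snot (.var n) ::ₘ Γ) (.snot (.var n))
  | andR {Γ A B} : Gder Γ A → Gder Γ B → Gder Γ (.and A B)
  | andL {Γ A B C} : Gder (A ::ₘ B ::ₘ Γ) C → Gder (.and A B ::ₘ Γ) C
  | orR₁ {Γ A B} : Gder Γ A → Gder Γ (.or A B)
  | orR₂ {Γ A B} : Gder Γ B → Gder Γ (.or A B)
  | orL {Γ A B C} : Gder (A ::ₘ Γ) C → Gder (B ::ₘ Γ) C → Gder (.or A B ::ₘ Γ) C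
  | impR {Γ A B} : Gder (A ::ₘ Γ) B → Gder Γ (.imp A B)
  | impL {Γ A B C} : Gder (.imp A B ::ₘ Γ) A → Gder (B ::ₘ Γ) C → Gder (.imp A B ::ₘ Γ) C
  | snotSnotR {Γ A} : Gder Γ A → Gder Γ (.snot (.snot A))
  | snotSnotL {Γ A C} : Gder (A ::ₘ Γ) C → Gder (.snot (.snot A) ::ₘ Γ) C
  | snotAndR₁ {Γ A B} : Gder Γ (.snot A) → Gder Γ (.snot (.and A B))
  | snotAndR₂ {Γ A B} : Gder Γ (.snot B) → Gder Γ (.snot (.and A B))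
  | snotAndL {Γ A B C} : Gder (.snot A ::ₘ Γ) C → Gder (.snot B ::ₘ Γ) C →
      Gder (.snot (.and A B) ::ₘ Γ) C
  | snotOrR {Γ A B} : Gder Γ (.snot A) → Gder Γ (.snot B) → Gder Γ (.snot (.or A B))
  | snotOrL {Γ A B C} : Gder (.snot A ::ₘ .snot B ::ₘ Γ) C → Gder (.snot (.or A B) ::ₘ Γ) C
  | snotImpR {Γ A B} : Gder (A ::ₘ Γ) (.snot B) → Gder Γ (.snot (.imp A B))
  | snotImpL {Γ A B C} : Gder (.snot (.imp A B) ::ₘ Γ) A → Gder (.snot B ::ₘ Γ) C →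
      Gder (.snot (.imp A B) ::ₘ Γ) C

/-!
The rule (R∼→) makes `∼(A → B)` provable exactly when `A → ∼B` is, so each connexive thesis
reduces to an intuitionistic tautology such as `∼A → ∼A` or `(A → B) → (A → ∼∼B)`. The leaves
of their derivations are closed by the identity sequents `Γ, A ⇒ A`, which hold for all
formulas (not only variables) by induction on `A`, proved simultaneously with `Γ, ∼A ⇒ ∼A`.
-/

namespace Gder

variable {Γ : Multiset Formula} {A B C : Formula}

theorem of_mem_and_snot_of_mem (A : Formula) :
    ∀ Γ : Multiset Formula, (A ∈ Γ → Gder Γ A) ∧ (.snot A ∈ Γ → Gder Γ (.snot A)) := by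
  induction A with
  | var n =>
    refine fun Γ => ⟨fun h => ?_, fun h => ?_⟩ <;>
      obtain ⟨Δ, rfl⟩ := Multiset.exists_cons_of_mem h
    exacts [ax, axSnot]
  | snot A ih =>
    refine fun Γ => ⟨(ih Γ).2, fun h => ?_⟩
    obtain ⟨Δ, rfl⟩ := Multiset.exists_cons_of_mem h
    exact snotSnotL (snotSnotR ((ih _).1 (by simp)))
  | and A B ihA ihB =>
    refine fun Γ => ⟨fun h => ?_, fun h => ?_⟩ <;>
      obtain ⟨Δ, rfl⟩ := Multiset.exists_cons_of_mem h
    · exact andL (andR ((ihA _).1 (by simp)) ((ihB _).1 (by simp)))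
    · exact snotAndL (snotAndR₁ ((ihA _).2 (by simp))) (snotAndR₂ ((ihB _).2 (by simp)))
  | or A B ihA ihB =>
    refine fun Γ => ⟨fun h => ?_, fun h => ?_⟩ <;>
      obtain ⟨Δ, rfl⟩ := Multiset.exists_cons_of_mem h
    · exact orL (orR₁ ((ihA _).1 (by simp))) (orR₂ ((ihB _).1 (by simp)))
    · exact snotOrL (snotOrR ((ihA _).2 (by simp)) ((ihB _).2 (by simp)))
  | imp A B ihA ihB =>
    refine fun Γ => ⟨fun h => ?_, fun h => ?_⟩ <;>
      obtain ⟨Δ, rfl⟩ := Multiset.exists_cons_of_mem h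
    · refine impR ?_
      rw [Multiset.cons_swap]
      exact impL ((ihA _).1 (by simp)) ((ihB _).1 (by simp))
    · refine snotImpR ?_
      rw [Multiset.cons_swap]
      exact snotImpL ((ihA _).1 (by simp)) ((ihB _).2 (by simp))

theorem of_mem (h : A ∈ Γ) : Gder Γ A :=
  (of_mem_and_snot_of_mem A Γ).1 h

theorem mp (hA : A ∈ Γ) (h : Gder (B ::ₘ Γ) C) : Gder (.imp A B ::ₘ Γ) C :=
  impL (of_mem (by simp [hA])) h

theorem aristotle : Gder Γ (.snot (.imp (.snot A) A)) :=
  snotImpR (of_mem (by simp))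

theorem aristotle' : Gder Γ (.snot (.imp A (.snot A))) :=
  snotImpR (snotSnotR (of_mem (by simp)))

theorem boethius : Gder Γ (.imp (.imp A B) (.snot (.imp A (.snot B)))) := by
  refine impR (snotImpR ?_)
  rw [Multiset.cons_swap]
  exact mp (by simp) (snotSnotR (of_mem (by simp)))

theorem boethius' : Gder Γ (.imp (.imp A (.snot B)) (.snot (.imp A B))) := by
  refine impR (snotImpR ?_)
  rw [Multiset.cons_swap]
  exact mp (by simp) (of_mem (by simp))

end Gder

/-- `C` validates the connexive theses: Aristotle's theses `∼(∼A → A)` and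
`∼(A → ∼A)`, and Boethius' theses `(A → B) → ∼(A → ∼B)` and
`(A → ∼B) → ∼(A → B)`, are all derivable in `G3C`. -/
theorem C_connexive_theses (A B : Formula) :
    Gder 0 (.snot (.imp (.snot A) A)) ∧
    Gder 0 (.snot (.imp A (.snot A))) ∧
    Gder 0 (.imp (.imp A B) (.snot (.imp A (.snot B)))) ∧
    Gder 0 (.imp (.imp A (.snot B)) (.snot (.imp A B))) :=
  ⟨Gder.aristotle, Gder.aristotle', Gder.boethius, Gder.boethius'⟩
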